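/- arXiv:2401.09116 — 2 statements merged into one kernel-verified Lean document; each statement's English description precedes it below -/
import Mathlib

section
/- Let (h, [·,·], *) be a right Post-Lie algebra over a field K of characteristic zero, and let * also denote its unique extension to the universal enveloping algebra U(h) (satisfying: ε(f*g) = ε(f)ε(g); Δ(f*g) = Δ(f)*Δ(g) componentwise; f*1 = f; 1*f = ε(f)·1; f*(g·y) = (f*g)*y − f*(g*y) for y ∈ h; (f·g)*h = (f*h⁽¹⁾)·(g*h⁽²⁾); (f*g)*h = f*((g*h⁽¹⁾)·h⁽²⁾)). Then (U(h), *) is a right Post-Hopf algebra; in particular the right multiplication map γ : U(h) → End_K(U(h)), γ(z)(y) = y * z, is convolution invertible: there exists a linear β : U(h) → End_K(U(h)) with γ(x⁽¹⁾) ∘ β(x⁽²⁾) = β(x⁽¹⁾) ∘ γ(x⁽²⁾) = ε(x)·id for all x ∈ U(h). -/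
open TensorProduct

/-- `(L, ⁅·,·⁆, m)` is a right Post-Lie algebra. -/
def IsRightPostLie (K : Type*) {L : Type*} [Field K] [LieRing L] [LieAlgebra K L]
    (m : L →ₗ[K] L →ₗ[K] L) : Prop :=
  (∀ x y z : L, m x ⁅y, z⁆
      = (m (m x y) z - m x (m y z)) - (m (m x z) y - m x (m z y)))
  ∧ (∀ x y z : L, m ⁅x, y⁆ z = ⁅m x z, y⁆ + ⁅x, m y z⁆)

/-!
Since `B f 1 = f`, the right multiplication `γ = B.flip` agrees with the convolution unit on the
scalars `K · 1`. The elements of `L` are primitive, so `U(L)` is a filtered coalgebra for the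
filtration `Uₙ = (K + L)ⁿ` with `U₀ = K · 1`; for such a coalgebra a map vanishing on `U₀` is
locally nilpotent for convolution: its `n`-th convolution power vanishes on `Uₖ` for `k < n`.
Hence the geometric series `∑ₙ (1 - γ)ⁿ` is finite on each `Uₖ` and defines a two-sided
convolution inverse of `γ = 1 - (1 - γ)`.
-/

open Coalgebra WithConv Finset.HasAntidiagonal

section AntidiagonalTensor

variable {R M : Type*} [CommSemiring R]

def Submodule.antidiagonalTensor [AddCommMonoid M] [Module R M] (F : ℕ → Submodule R M) (n : ℕ) :
    Submodule R (M ⊗[R] M) :=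
  ⨆ p ∈ antidiagonal n, map₂ (TensorProduct.mk R M M) (F p.1) (F p.2)

theorem Submodule.antidiagonalTensor_le_iff [AddCommMonoid M] [Module R M]
    {F : ℕ → Submodule R M} {n : ℕ} {P : Submodule R (M ⊗[R] M)} :
    antidiagonalTensor F n ≤ P ↔ ∀ p ∈ antidiagonal n, ∀ a ∈ F p.1, ∀ b ∈ F p.2, a ⊗ₜ b ∈ P := by
  simp only [antidiagonalTensor, iSup₂_le_iff, map₂_le, TensorProduct.mk_apply]

theorem Submodule.tmul_mem_antidiagonalTensor [AddCommMonoid M] [Module R M]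
    (F : ℕ → Submodule R M) {i j n : ℕ} (hn : i + j = n) {a b : M} (ha : a ∈ F i)
    (hb : b ∈ F j) : a ⊗ₜ[R] b ∈ antidiagonalTensor F n :=
  antidiagonalTensor_le_iff.mp le_rfl (i, j) (mem_antidiagonal.mpr hn) a ha b hb

theorem Submodule.map₂_mk_mul_map₂_mk_le {A B : Type*} [Semiring A] [Semiring B]
    [Algebra R A] [Algebra R B] (P P' : Submodule R A) (Q Q' : Submodule R B) :
    map₂ (TensorProduct.mk R A B) P Q * map₂ (TensorProduct.mk R A B) P' Q' ≤
      map₂ (TensorProduct.mk R A B) (P * P') (Q * Q') := by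
  refine Submodule.mul_le.mpr fun s hs t ht => ?_
  suffices map₂ (TensorProduct.mk R A B) P Q ≤
      comap (LinearMap.mulRight R t) (map₂ (TensorProduct.mk R A B) (P * P') (Q * Q')) from
    this hs
  refine map₂_le.mpr fun a ha b hb => ?_
  suffices map₂ (TensorProduct.mk R A B) P' Q' ≤ comap (LinearMap.mulLeft R (a ⊗ₜ b))
      (map₂ (TensorProduct.mk R A B) (P * P') (Q * Q')) from this ht
  refine map₂_le.mpr fun a' ha' b' hb' => ?_
  rw [mem_comap, LinearMap.mulLeft_apply, TensorProduct.mk_apply,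
    Algebra.TensorProduct.tmul_mul_tmul]
  exact apply_mem_map₂ _ (mul_mem_mul ha ha') (mul_mem_mul hb hb')

theorem Submodule.antidiagonalTensor_mul_le [Semiring M] [Algebra R M] {F : ℕ → Submodule R M}
    (hF : ∀ a b, F a * F b ≤ F (a + b)) (a b : ℕ) :
    antidiagonalTensor F a * antidiagonalTensor F b ≤ antidiagonalTensor F (a + b) := by
  simp only [antidiagonalTensor, Submodule.iSup_mul, Submodule.mul_iSup]
  refine iSup₂_le fun q hq => iSup₂_le fun p hp => ?_
  rw [mem_antidiagonal] at hp hq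
  refine (map₂_mk_mul_map₂_mk_le _ _ _ _).trans ((map₂_le_map₂ (hF _ _) (hF _ _)).trans ?_)
  exact map₂_le.mpr fun x hx y hy => tmul_mem_antidiagonalTensor F (by omega) hx hy

end AntidiagonalTensor

theorem LinearMap.exists_apply_eq_of_eventually_const {R M P : Type*} [Semiring R]
    [AddCommMonoid M] [Module R M] [AddCommMonoid P] [Module R P] (g : ℕ → M →ₗ[R] P)
    (hg : ∀ x, ∃ N, ∀ n ≥ N, g n x = g N x) :
    ∃ β : M →ₗ[R] P, ∀ x N, (∀ n ≥ N, g n x = g N x) → β x = g N x := by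
  choose N hN using hg
  have hlim : ∀ x n, N x ≤ n → g (N x) x = g n x := fun x n hn => (hN x n hn).symm
  refine ⟨{ toFun := fun x => g (N x) x, map_add' := fun x y => ?_, map_smul' := fun c x => ?_ },
    fun x M hM => ?_⟩
  · let n := max (N (x + y)) (max (N x) (N y))
    simp only [hlim (x + y) n (by omega), hlim x n (by omega), hlim y n (by omega), map_add]
  · simp only [hlim (c • x) (max (N (c • x)) (N x)) (by omega),
      hlim x (max (N (c • x)) (N x)) (by omega), map_smul, RingHom.id_apply]
  · show g (N x) x = g M x
    rw [hlim x (max (N x) M) (by omega), hM _ (by omega)]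

section FilteredCoalgebra

variable {R C A : Type*} [CommSemiring R] [AddCommMonoid C] [Module R C] [Coalgebra R C]
  [Ring A] [Algebra R A]

structure IsCoalgebraFiltration (F : ℕ → Submodule R C) : Prop where
  exhaustive : ∀ x, ∃ n, x ∈ F n
  map_comul_le : ∀ n, (F n).map (comul (R := R)) ≤ Submodule.antidiagonalTensor F n

variable {F : ℕ → Submodule R C}

theorem IsCoalgebraFiltration.convMul_apply_eq_zero (hF : IsCoalgebraFiltration F)
    {f g : WithConv (C →ₗ[R] A)} {n : ℕ}
    (hfg : ∀ p ∈ antidiagonal n, ∀ a ∈ F p.1, ∀ b ∈ F p.2, f a * g b = 0)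
    {x : C} (hx : x ∈ F n) : (f * g) x = 0 := by
  have hle : Submodule.antidiagonalTensor F n ≤
      LinearMap.ker (LinearMap.mul' R A ∘ₗ map f.ofConv g.ofConv) :=
    Submodule.antidiagonalTensor_le_iff.mpr fun p hp a ha b hb => by
      simpa using hfg p hp a ha b hb
  exact hle (hF.map_comul_le n (Submodule.mem_map_of_mem hx))

theorem IsCoalgebraFiltration.convPow_apply_eq_zero (hF : IsCoalgebraFiltration F)
    {u : WithConv (C →ₗ[R] A)} (hu : ∀ x ∈ F 0, u x = 0) {n k : ℕ} (hkn : k < n)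
    {x : C} (hx : x ∈ F k) : (u ^ n) x = 0 := by
  induction n generalizing k x with
  | zero => omega
  | succ n ih =>
    rw [pow_succ']
    refine hF.convMul_apply_eq_zero (fun p hp a ha b hb => ?_) hx
    rw [mem_antidiagonal] at hp
    rcases Nat.eq_zero_or_pos p.1 with h0 | hpos
    · rw [hu a (h0 ▸ ha), zero_mul]
    · rw [ih (by omega) hb, mul_zero]

theorem IsCoalgebraFiltration.convMul_apply_eq_of_eqOn_right (hF : IsCoalgebraFiltration F)
    (f : WithConv (C →ₗ[R] A)) {g g' : WithConv (C →ₗ[R] A)} {k : ℕ}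
    (hgg' : ∀ j ≤ k, Set.EqOn g g' (F j)) {x : C} (hx : x ∈ F k) :
    (f * g) x = (f * g') x := by
  rw [← sub_eq_zero, ← LinearMap.sub_apply, ← ofConv_sub, ← mul_sub]
  refine hF.convMul_apply_eq_zero (fun p hp a _ b hb => ?_) hx
  rw [ofConv_sub, LinearMap.sub_apply, hgg' p.2 (antidiagonal.snd_le hp) hb, sub_self, mul_zero]

theorem IsCoalgebraFiltration.convMul_apply_eq_of_eqOn_left (hF : IsCoalgebraFiltration F)
    {g g' : WithConv (C →ₗ[R] A)} (f : WithConv (C →ₗ[R] A)) {k : ℕ}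
    (hgg' : ∀ j ≤ k, Set.EqOn g g' (F j)) {x : C} (hx : x ∈ F k) :
    (g * f) x = (g' * f) x := by
  rw [← sub_eq_zero, ← LinearMap.sub_apply, ← ofConv_sub, ← sub_mul]
  refine hF.convMul_apply_eq_zero (fun p hp a ha b _ => ?_) hx
  rw [ofConv_sub, LinearMap.sub_apply, hgg' p.1 (antidiagonal.fst_le hp) ha, sub_self, zero_mul]

theorem IsCoalgebraFiltration.isUnit_of_eqOn_one (hF : IsCoalgebraFiltration F)
    {φ : WithConv (C →ₗ[R] A)} (hφ : Set.EqOn φ (1 : WithConv (C →ₗ[R] A)) (F 0)) :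
    IsUnit φ := by
  set u := 1 - φ with hu_def
  have hu : ∀ x ∈ F 0, u x = 0 := fun x hx => by
    rw [hu_def, ofConv_sub, LinearMap.sub_apply, hφ hx, sub_self]
  let s : ℕ → WithConv (C →ₗ[R] A) := fun N => ∑ i ∈ Finset.range N, u ^ i
  have hs : ∀ k x, x ∈ F k → ∀ n ≥ k + 1, s n x = s (k + 1) x := by
    intro k x hx n hn
    induction n, hn using Nat.le_induction with
    | base => rfl
    | succ n hn ih =>
      rw [show s (n + 1) = s n + u ^ n from Finset.sum_range_succ _ _, ofConv_add,
        LinearMap.add_apply, ih, hF.convPow_apply_eq_zero hu (by omega) hx, add_zero]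
  obtain ⟨β, hβ⟩ := LinearMap.exists_apply_eq_of_eventually_const (fun n => (s n).ofConv)
    fun x => (hF.exhaustive x).elim fun k hx => ⟨k + 1, hs k x hx⟩
  have hβs : ∀ k, ∀ j ≤ k, Set.EqOn (toConv β) (s (k + 1)) (F j) := fun k j hj b hb => by
    rw [show toConv β b = β b from rfl, hβ b (j + 1) (hs j b hb), hs j b hb (k + 1) (by omega)]
  have hφ_eq : φ = 1 - u := by rw [hu_def, sub_sub_cancel]
  refine ⟨⟨φ, toConv β, ?_, ?_⟩, rfl⟩ <;> ext x <;> obtain ⟨k, hx⟩ := hF.exhaustive x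
  · rw [hF.convMul_apply_eq_of_eqOn_right φ (hβs k) hx, hφ_eq, mul_neg_geom_sum, ofConv_sub,
      LinearMap.sub_apply, hF.convPow_apply_eq_zero hu (Nat.lt_succ_self k) hx, sub_zero]
  · rw [hF.convMul_apply_eq_of_eqOn_left φ (hβs k) hx, hφ_eq, geom_sum_mul_neg, ofConv_sub,
      LinearMap.sub_apply, hF.convPow_apply_eq_zero hu (Nat.lt_succ_self k) hx, sub_zero]

end FilteredCoalgebra

namespace UniversalEnvelopingAlgebra

variable (K L : Type*) [CommRing K] [LieRing L] [LieAlgebra K L]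

def filtration (n : ℕ) : Submodule K (UniversalEnvelopingAlgebra K L) :=
  (1 ⊔ Submodule.span K (Set.range (ι K))) ^ n

theorem adjoin_range_ι : Algebra.adjoin K (Set.range (ι K (L := L))) = ⊤ := by
  have : Set.range (ι K (L := L)) = mkAlgHom K L '' Set.range (TensorAlgebra.ι K) := by
    rw [← Set.range_comp]; rfl
  rw [this, Algebra.adjoin_image, TensorAlgebra.adjoin_range_ι, Algebra.map_top,
    AlgHom.range_eq_top]
  exact RingCon.mkₐ_surjective _

theorem filtration_zero : filtration K L 0 = 1 := pow_zero _

theorem filtration_one : filtration K L 1 = 1 ⊔ Submodule.span K (Set.range (ι K)) := pow_one _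

theorem filtration_add (m n : ℕ) :
    filtration K L (m + n) = filtration K L m * filtration K L n := pow_add _ m n

theorem monotone_filtration : Monotone (filtration K L) := fun _ _ hmn =>
  pow_le_pow_right₀ le_sup_left hmn

theorem one_mem_filtration (n : ℕ) : 1 ∈ filtration K L n :=
  Submodule.one_le.mp (one_le_pow₀ le_sup_left)

theorem ι_mem_filtration_one (z : L) : ι K z ∈ filtration K L 1 := by
  rw [filtration_one]
  exact Submodule.mem_sup_right (Submodule.subset_span ⟨z, rfl⟩)

theorem exists_mem_filtration (x : UniversalEnvelopingAlgebra K L) :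
    ∃ n, x ∈ filtration K L n := by
  have hx : x ∈ Algebra.adjoin K (Set.range (ι K (L := L))) := by
    rw [adjoin_range_ι]; trivial
  induction hx using Algebra.adjoin_induction with
  | mem x hx =>
    obtain ⟨z, rfl⟩ := hx
    exact ⟨1, ι_mem_filtration_one K L z⟩
  | algebraMap r => exact ⟨0, Submodule.algebraMap_mem r⟩
  | add x y _ _ hx hy =>
    obtain ⟨m, hm⟩ := hx
    obtain ⟨n, hn⟩ := hy
    exact ⟨max m n, add_mem (monotone_filtration K L (le_max_left m n) hm)
      (monotone_filtration K L (le_max_right m n) hn)⟩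
  | mul x y _ _ hx hy =>
    obtain ⟨m, hm⟩ := hx
    obtain ⟨n, hn⟩ := hy
    exact ⟨m + n, filtration_add K L m n ▸ Submodule.mul_mem_mul hm hn⟩

variable {K L}

theorem map_comul_filtration_le
    (Δ : UniversalEnvelopingAlgebra K L →ₐ[K]
      UniversalEnvelopingAlgebra K L ⊗[K] UniversalEnvelopingAlgebra K L)
    (hΔ : ∀ z : L, Δ (ι K z) = ι K z ⊗ₜ 1 + 1 ⊗ₜ ι K z) (n : ℕ) :
    (filtration K L n).map Δ.toLinearMap ≤ Submodule.antidiagonalTensor (filtration K L) n := by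
  have hgen :
      (filtration K L 1).map Δ.toLinearMap ≤ Submodule.antidiagonalTensor (filtration K L) 1 := by
    rw [filtration_one, Submodule.map_sup, Submodule.map_one, Submodule.map_span,
      sup_le_iff, Submodule.one_le, Submodule.span_le]
    refine ⟨Submodule.tmul_mem_antidiagonalTensor _ (zero_add 1)
      (one_mem_filtration K L 0) (one_mem_filtration K L 1), ?_⟩
    rintro _ ⟨_, ⟨z, rfl⟩, rfl⟩
    rw [SetLike.mem_coe, AlgHom.toLinearMap_apply, hΔ]
    exact add_mem
      (Submodule.tmul_mem_antidiagonalTensor _ (add_zero 1) (ι_mem_filtration_one K L z)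
        (one_mem_filtration K L 0))
      (Submodule.tmul_mem_antidiagonalTensor _ (zero_add 1) (one_mem_filtration K L 0)
        (ι_mem_filtration_one K L z))
  induction n with
  | zero =>
    rw [filtration_zero, Submodule.map_one, Submodule.one_le]
    exact Submodule.tmul_mem_antidiagonalTensor _ (zero_add 0)
      (one_mem_filtration K L 0) (one_mem_filtration K L 0)
  | succ n ih =>
    rw [filtration_add, Submodule.map_mul]
    exact (mul_le_mul' ih hgen).trans
      (Submodule.antidiagonalTensor_mul_le (fun a b => (filtration_add K L a b).ge) n 1)

section

attribute [local instance] LieRing.ofAssociativeRing LieAlgebra.ofAssociativeAlgebra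

theorem algHom_ext {A : Type*} [Ring A] [Algebra K A]
    {f g : UniversalEnvelopingAlgebra K L →ₐ[K] A} (h : ∀ z, f (ι K z) = g (ι K z)) : f = g :=
  hom_ext K (LieHom.ext h)

end

noncomputable abbrev coalgebraOfPrimitive
    (Δ : UniversalEnvelopingAlgebra K L →ₐ[K]
      UniversalEnvelopingAlgebra K L ⊗[K] UniversalEnvelopingAlgebra K L)
    (hΔ : ∀ z : L, Δ (ι K z) = ι K z ⊗ₜ 1 + 1 ⊗ₜ ι K z)
    (ε : UniversalEnvelopingAlgebra K L →ₐ[K] K) (hε : ∀ z : L, ε (ι K z) = 0) :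
    Coalgebra K (UniversalEnvelopingAlgebra K L) where
  comul := Δ.toLinearMap
  counit := ε.toLinearMap
  coassoc := by
    have h : (Algebra.TensorProduct.assoc K K K _ _ _).toAlgHom.comp
        ((Algebra.TensorProduct.map Δ (AlgHom.id K _)).comp Δ) =
        (Algebra.TensorProduct.map (AlgHom.id K _) Δ).comp Δ := by
      refine algHom_ext fun z => ?_
      simp only [AlgHom.comp_apply, hΔ, map_add, Algebra.TensorProduct.map_tmul, map_one,
        AlgHom.coe_id, id_eq, Algebra.TensorProduct.one_def, TensorProduct.tmul_add,
        TensorProduct.add_tmul]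
      abel
    exact LinearMap.ext fun x => AlgHom.congr_fun h x
  rTensor_counit_comp_comul := by
    have h : (Algebra.TensorProduct.map ε (AlgHom.id K _)).comp Δ =
        Algebra.TensorProduct.includeRight := by
      refine algHom_ext fun z => ?_
      simp only [AlgHom.comp_apply, hΔ, map_add, Algebra.TensorProduct.map_tmul, hε, map_one,
        AlgHom.coe_id, id_eq, TensorProduct.zero_tmul, zero_add,
        Algebra.TensorProduct.includeRight_apply]
    exact LinearMap.ext fun x => AlgHom.congr_fun h x
  lTensor_counit_comp_comul := by
    have h : (Algebra.TensorProduct.map (AlgHom.id K _) ε).comp Δ =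
        Algebra.TensorProduct.includeLeft := by
      refine algHom_ext fun z => ?_
      simp only [AlgHom.comp_apply, hΔ, map_add, Algebra.TensorProduct.map_tmul, hε, map_one,
        AlgHom.coe_id, id_eq, TensorProduct.tmul_zero, add_zero,
        Algebra.TensorProduct.includeLeft_apply]
    exact LinearMap.ext fun x => AlgHom.congr_fun h x

end UniversalEnvelopingAlgebra

theorem TensorProduct.lift_llcomp_compl₁₂ {R C M : Type*} [CommSemiring R] [AddCommMonoid C]
    [Module R C] [AddCommMonoid M] [Module R M] (f g : C →ₗ[R] Module.End R M) :
    lift ((LinearMap.llcomp R M M M).compl₁₂ f g) =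
      LinearMap.mul' R (Module.End R M) ∘ₗ map f g :=
  ext' fun _ _ => rfl

theorem statement10_general {K L : Type*} [Field K] [LieRing L] [LieAlgebra K L]
    (Δ : UniversalEnvelopingAlgebra K L →ₐ[K]
          UniversalEnvelopingAlgebra K L ⊗[K] UniversalEnvelopingAlgebra K L)
    (hΔ : ∀ x : L, Δ (UniversalEnvelopingAlgebra.ι K x)
        = UniversalEnvelopingAlgebra.ι K x ⊗ₜ[K] (1 : UniversalEnvelopingAlgebra K L)
          + (1 : UniversalEnvelopingAlgebra K L) ⊗ₜ[K] UniversalEnvelopingAlgebra.ι K x)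
    (ε : UniversalEnvelopingAlgebra K L →ₐ[K] K)
    (hε : ∀ x : L, ε (UniversalEnvelopingAlgebra.ι K x) = 0)
    (B : UniversalEnvelopingAlgebra K L →ₗ[K]
          UniversalEnvelopingAlgebra K L →ₗ[K] UniversalEnvelopingAlgebra K L)
    (hone : ∀ f, B f 1 = f) :
    ∃ β : UniversalEnvelopingAlgebra K L →ₗ[K]
            UniversalEnvelopingAlgebra K L →ₗ[K] UniversalEnvelopingAlgebra K L,
      ∀ x : UniversalEnvelopingAlgebra K L,
        TensorProduct.lift
            ((LinearMap.llcomp K (UniversalEnvelopingAlgebra K L)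
                (UniversalEnvelopingAlgebra K L)
                (UniversalEnvelopingAlgebra K L)).compl₁₂ B.flip β) (Δ x)
            = ε x • (LinearMap.id :
                UniversalEnvelopingAlgebra K L →ₗ[K] UniversalEnvelopingAlgebra K L)
        ∧ TensorProduct.lift
            ((LinearMap.llcomp K (UniversalEnvelopingAlgebra K L)
                (UniversalEnvelopingAlgebra K L)
                (UniversalEnvelopingAlgebra K L)).compl₁₂ β B.flip) (Δ x)
            = ε x • (LinearMap.id :
                UniversalEnvelopingAlgebra K L →ₗ[K] UniversalEnvelopingAlgebra K L) := by
  let := UniversalEnvelopingAlgebra.coalgebraOfPrimitive Δ hΔ ε hε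
  have hF : IsCoalgebraFiltration (UniversalEnvelopingAlgebra.filtration K L) :=
    ⟨UniversalEnvelopingAlgebra.exists_mem_filtration K L,
      UniversalEnvelopingAlgebra.map_comul_filtration_le Δ hΔ⟩
  have hγ : Set.EqOn (toConv B.flip) (1 : WithConv (_ →ₗ[K] Module.End K _))
      (UniversalEnvelopingAlgebra.filtration K L 0) := by
    rintro _ ⟨c, rfl⟩
    ext y
    have hε1 : counit (R := K) (1 : UniversalEnvelopingAlgebra K L) = 1 := map_one ε
    simp [hone, hε1]
  obtain ⟨⟨_, β, hγβ, hβγ⟩, rfl⟩ := hF.isUnit_of_eqOn_one hγ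
  refine ⟨β.ofConv, fun x => ⟨?_, ?_⟩⟩
  all_goals rw [TensorProduct.lift_llcomp_compl₁₂, ← Module.End.one_eq_id,
    ← Algebra.algebraMap_eq_smul_one]
  exacts [congr(($hγβ).ofConv x), congr(($hβγ).ofConv x)]

/-- For a right Post-Lie algebra `(L, ⁅·,·⁆, m)`, the extension `B` of
`m` to `U(L)` turns `(U(L), B)` into a right Post-Hopf algebra; in particular the right
multiplication `γ(z)(y) = y * z` is convolution invertible. -/
theorem statement10 {K L : Type*} [Field K] [CharZero K] [LieRing L] [LieAlgebra K L]
    (m : L →ₗ[K] L →ₗ[K] L) (hm : IsRightPostLie K m)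
    (Δ : UniversalEnvelopingAlgebra K L →ₐ[K]
          UniversalEnvelopingAlgebra K L ⊗[K] UniversalEnvelopingAlgebra K L)
    (hΔ : ∀ x : L, Δ (UniversalEnvelopingAlgebra.ι K x)
        = UniversalEnvelopingAlgebra.ι K x ⊗ₜ[K] (1 : UniversalEnvelopingAlgebra K L)
          + (1 : UniversalEnvelopingAlgebra K L) ⊗ₜ[K] UniversalEnvelopingAlgebra.ι K x)
    (ε : UniversalEnvelopingAlgebra K L →ₐ[K] K)
    (hε : ∀ x : L, ε (UniversalEnvelopingAlgebra.ι K x) = 0)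
    (B : UniversalEnvelopingAlgebra K L →ₗ[K]
          UniversalEnvelopingAlgebra K L →ₗ[K] UniversalEnvelopingAlgebra K L)
    (hagree : ∀ x y : L,
      B (UniversalEnvelopingAlgebra.ι K x) (UniversalEnvelopingAlgebra.ι K y)
        = UniversalEnvelopingAlgebra.ι K (m x y))
    (hcounit : ∀ f g, ε (B f g) = ε f * ε g)
    (hcomul : ∀ f g, Δ (B f g) = TensorProduct.map₂ B B (Δ f) (Δ g))
    (hone : ∀ f, B f 1 = f)
    (hone' : ∀ f, B 1 f = ε f • (1 : UniversalEnvelopingAlgebra K L))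
    (hword : ∀ f g (y : L), B f (g * UniversalEnvelopingAlgebra.ι K y)
        = B (B f g) (UniversalEnvelopingAlgebra.ι K y)
          - B f (B g (UniversalEnvelopingAlgebra.ι K y)))
    (hmul : ∀ f g h, B (f * g) h
        = TensorProduct.lift
            ((LinearMap.mul K (UniversalEnvelopingAlgebra K L)).compl₁₂ (B f) (B g))
            (Δ h))
    (hBB : ∀ f g h, B (B f g) h
        = B f (TensorProduct.lift
            ((LinearMap.mul K (UniversalEnvelopingAlgebra K L)).compl₁₂ (B g) LinearMap.id)
            (Δ h))) :
    ∃ β : UniversalEnvelopingAlgebra K L →ₗ[K]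
            UniversalEnvelopingAlgebra K L →ₗ[K] UniversalEnvelopingAlgebra K L,
      ∀ x : UniversalEnvelopingAlgebra K L,
        TensorProduct.lift
            ((LinearMap.llcomp K (UniversalEnvelopingAlgebra K L)
                (UniversalEnvelopingAlgebra K L)
                (UniversalEnvelopingAlgebra K L)).compl₁₂ B.flip β) (Δ x)
            = ε x • (LinearMap.id :
                UniversalEnvelopingAlgebra K L →ₗ[K] UniversalEnvelopingAlgebra K L)
        ∧ TensorProduct.lift
            ((LinearMap.llcomp K (UniversalEnvelopingAlgebra K L)
                (UniversalEnvelopingAlgebra K L)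
                (UniversalEnvelopingAlgebra K L)).compl₁₂ β B.flip) (Δ x)
            = ε x • (LinearMap.id :
                UniversalEnvelopingAlgebra K L →ₗ[K] UniversalEnvelopingAlgebra K L) :=
  statement10_general Δ hΔ ε hε B hone
end

section
/- Let V be a vector space over a field K of characteristic zero. The canonical Lie algebra morphism from the free Lie algebra Lie(V) on V to T(V) (equipped with the commutator bracket [x,y] = x·y − y·x), induced by the inclusion of V into T(V), is injective and its image is exactly Prim(T(V)). In particular, Prim(T(V)) is isomorphic to the free Lie algebra generated by V. -/
open TensorProduct

attribute [local instance 100] LieRing.ofAssociativeRing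

noncomputable def taCounit (K V : Type*) [Field K] [AddCommGroup V] [Module K V] :
    TensorAlgebra K V →ₐ[K] K :=
  TensorAlgebra.lift K (0 : V →ₗ[K] K)

noncomputable def taComul (K V : Type*) [Field K] [AddCommGroup V] [Module K V] :
    TensorAlgebra K V →ₐ[K] TensorAlgebra K V ⊗[K] TensorAlgebra K V :=
  TensorAlgebra.lift K
    (((TensorProduct.mk K (TensorAlgebra K V) (TensorAlgebra K V)).flip 1
        + TensorProduct.mk K (TensorAlgebra K V) (TensorAlgebra K V) 1)
      ∘ₗ TensorAlgebra.ι K)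

/-!
Let `φ : Lie(V) → T(V)` be the canonical map, `D : T(V) → Lie(V)` the Dynkin map sending a word
`v₁ ⋯ vₙ` to the left-normed bracket `⁅⋯⁅v₁, v₂⁆, …, vₙ⁆`, `N` the operator multiplying words of
length `n` by `n`, and `S` the antipode. Dynkin's identity `φ ∘ D = S ⋆ N` is checked by induction
on the length of words, and on a primitive `x` its right side is `N x`; so `N` maps primitives, and
in particular `im φ`, into `im φ`. In the other direction `D ∘ φ` is a derivation of `Lie(V)` fixing
the generators, so it multiplies brackets of length `n` by `n`. In characteristic zero both
operators act with nonzero eigenvalues on the relevant parts, which can therefore be recovered from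
their images: `D (φ a) = 0` forces `a = 0`, and a primitive `x`, having no degree-zero part and
`N x ∈ im φ`, lies in `im φ`.
-/

namespace FreeLieAlgebra

variable (R : Type*) {X : Type*} [CommRing R]

@[elab_as_elim]
theorem induction_on {C : FreeLieAlgebra R X → Prop} (a : FreeLieAlgebra R X)
    (h_of : ∀ x, C (of R x)) (h_zero : C 0) (h_add : ∀ a b, C a → C b → C (a + b))
    (h_smul : ∀ (t : R) a, C a → C (t • a)) (h_lie : ∀ a b, C a → C b → C ⁅a, b⁆) : C a := by
  let S : LieSubalgebra R (FreeLieAlgebra R X) :=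
    { carrier := {a | C a}
      add_mem' := h_add _ _
      zero_mem' := h_zero
      smul_mem' := h_smul
      lie_mem' := h_lie _ _ }
  let g : FreeLieAlgebra R X →ₗ⁅R⁆ S := lift R fun x => ⟨of R x, h_of x⟩
  have hg : S.incl.comp g = LieHom.id := hom_ext fun x => by simp [g]
  have h := (g a).2
  rwa [← LieSubalgebra.coe_incl, ← LieHom.comp_apply, hg] at h

noncomputable def leftNormed : List X → FreeLieAlgebra R X
  | [] => 0
  | x :: l => l.foldl (fun a y => ⁅a, of R y⁆) (of R x)

theorem leftNormed_append_singleton {l : List X} (hl : l ≠ []) (x : X) :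
    leftNormed R (l ++ [x]) = ⁅leftNormed R l, of R x⁆ := by
  obtain ⟨y, l, rfl⟩ := List.exists_cons_of_ne_nil hl
  simp [leftNormed]

end FreeLieAlgebra

namespace Module.End

variable {K M ι : Type*} [Field K] [AddCommGroup M] [Module K M]

theorem apply_mem_biSup_eigenspace (f : Module.End K M) (μ : ι → K) (s : Finset ι) {x : M}
    (hx : x ∈ ⨆ i ∈ s, f.eigenspace (μ i)) : f x ∈ ⨆ i ∈ s, f.eigenspace (μ i) := by
  refine (iSup₂_le fun i hi y hy => ?_ :
    ⨆ i ∈ s, f.eigenspace (μ i) ≤ (⨆ i ∈ s, f.eigenspace (μ i)).comap f) hx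
  rw [Submodule.mem_comap, mem_eigenspace_iff.mp hy]
  exact Submodule.smul_mem _ _ (le_biSup (fun i => f.eigenspace (μ i)) hi hy)

/-- Peel off one eigenvalue at a time: `f x - μ j • x` has no component in the `μ j`-eigenspace,
and `μ j • x = f x - (f x - μ j • x)`. -/
theorem mem_of_apply_mem_of_mem_iSup_eigenspace {f : Module.End K M} {μ : ι → K}
    (hμ : ∀ i, μ i ≠ 0) {p : Submodule K M} (hp : ∀ y ∈ p, f y ∈ p) {x : M}
    (hx : x ∈ ⨆ i, f.eigenspace (μ i)) (hfx : f x ∈ p) : x ∈ p := by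
  classical
  obtain ⟨s, hs⟩ := Submodule.mem_iSup_iff_exists_finset.mp hx
  clear hx
  induction s using Finset.induction_on generalizing x with
  | empty => simp_all
  | insert j t _ ih =>
    rw [Finset.iSup_insert] at hs
    obtain ⟨y, hy, z, hz, rfl⟩ := Submodule.mem_sup.mp hs
    have hy' : f y = μ j • y := mem_eigenspace_iff.mp hy
    have hshift : f (y + z) - μ j • (y + z) ∈ p := by
      refine ih (by simpa using p.sub_mem (hp _ hfx) (p.smul_mem (μ j) hfx)) ?_
      rw [map_add, hy', smul_add, add_sub_add_left_eq_sub]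
      exact Submodule.sub_mem _ (apply_mem_biSup_eigenspace f μ t hz) (Submodule.smul_mem _ _ hz)
    rw [← Submodule.smul_mem_iff p (hμ j)]
    simpa using p.sub_mem hfx hshift

theorem lie_mem_eigenspace_add {L : Type*} [LieRing L] [LieAlgebra K L] {D : Module.End K L}
    (hD : ∀ x y, D ⁅x, y⁆ = ⁅D x, y⁆ + ⁅x, D y⁆) {μ ν : K} {x y : L}
    (hx : x ∈ D.eigenspace μ) (hy : y ∈ D.eigenspace ν) : ⁅x, y⁆ ∈ D.eigenspace (μ + ν) := by
  rw [mem_eigenspace_iff] at *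
  rw [hD, hx, hy, smul_lie, lie_smul, add_smul]

end Module.End

namespace Module.Basis

variable {κ R M : Type*} [CommSemiring R] [AddCommMonoid M] [Module R M] (b : Basis κ R M)

theorem tensorAlgebra_apply (w : FreeMonoid κ) :
    b.tensorAlgebra w = FreeMonoid.lift (fun i => TensorAlgebra.ι R (b i)) w := by
  have h : FreeAlgebra.basisFreeMonoid R κ w = FreeMonoid.lift (FreeAlgebra.ι R) w := by
    simp [FreeAlgebra.basisFreeMonoid, FreeAlgebra.equivMonoidAlgebraFreeMonoid,
      AlgEquiv.ofAlgHom, MonoidAlgebra.lift_single]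
  rw [tensorAlgebra, map_apply, h, AlgEquiv.toLinearEquiv_apply, ← MonoidHom.coe_coe,
    ← MonoidHom.comp_apply, FreeMonoid.comp_lift]
  simp [Function.comp_def]

theorem tensorAlgebra_one : b.tensorAlgebra 1 = 1 := by
  simp [tensorAlgebra_apply]

theorem tensorAlgebra_of (i : κ) :
    b.tensorAlgebra (FreeMonoid.of i) = TensorAlgebra.ι R (b i) := by
  simp [tensorAlgebra_apply]

theorem tensorAlgebra_mul_of (w : FreeMonoid κ) (i : κ) :
    b.tensorAlgebra (w * FreeMonoid.of i) = b.tensorAlgebra w * TensorAlgebra.ι R (b i) := by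
  simp [tensorAlgebra_apply]

end Module.Basis

namespace TensorAlgebra

section ext

variable {R M N : Type*} [CommSemiring R] [AddCommMonoid M] [Module R M]
  [AddCommMonoid N] [Module R N]

theorem linearMap_ext_of_mul_ι {s : Set M} (hs : Submodule.span R s = ⊤)
    {f g : TensorAlgebra R M →ₗ[R] N} (h_one : f 1 = g 1)
    (h_mul_ι : ∀ x, ∀ m ∈ s, f x = g x → f (x * ι R m) = g (x * ι R m)) : f = g := by
  set p := LinearMap.eqLocus f g
  have hι : ∀ m, ∀ x ∈ p, x * ι R m ∈ p := by
    intro m x hx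
    have hm : m ∈ Submodule.span R s := hs ▸ Submodule.mem_top
    induction hm using Submodule.span_induction with
    | mem m hm => exact h_mul_ι x m hm hx
    | zero => simp only [map_zero, mul_zero, p.zero_mem]
    | add m m' _ _ hm hm' => simpa only [map_add, mul_add] using p.add_mem hm hm'
    | smul c m _ hm => simpa only [map_smul, mul_smul_comm] using p.smul_mem c hm
  have hmul : ∀ y, ∀ x ∈ p, x * y ∈ p := by
    intro y
    induction y using TensorAlgebra.induction with
    | algebraMap r =>
      intro x hx
      rw [← Algebra.commutes, ← Algebra.smul_def]
      exact p.smul_mem r hx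
    | ι m => exact hι m
    | mul y z hy hz => intro x hx; simpa only [mul_assoc] using hz _ (hy x hx)
    | add y z hy hz => intro x hx; simpa only [mul_add] using p.add_mem (hy x hx) (hz x hx)
  exact LinearMap.ext fun y => by simpa [p] using hmul y 1 h_one

end ext

variable {K V : Type*} [Field K] [AddCommGroup V] [Module K V]

@[simp]
theorem taCounit_ι (v : V) : taCounit K V (ι K v) = 0 := by
  simp [taCounit]

@[simp]
theorem taComul_ι (v : V) : taComul K V (ι K v) = ι K v ⊗ₜ[K] 1 + 1 ⊗ₜ[K] ι K v := by
  simp [taComul]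

variable (K V) in
def primitives : LieSubalgebra K (TensorAlgebra K V) where
  carrier := {x | taComul K V x = x ⊗ₜ[K] 1 + 1 ⊗ₜ[K] x}
  add_mem' {x y} hx hy := by
    simp only [Set.mem_ofPred_eq] at hx hy ⊢
    simp only [map_add, hx, hy, add_tmul, tmul_add]
    abel
  zero_mem' := by simp
  smul_mem' c x hx := by
    simp only [Set.mem_ofPred_eq] at hx ⊢
    simp only [map_smul, hx, smul_add, smul_tmul', tmul_smul]
  lie_mem' {x y} hx hy := by
    simp only [Set.mem_ofPred_eq] at hx hy ⊢
    simp only [Ring.lie_def, map_sub, map_mul, hx, hy, add_mul, mul_add,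
      Algebra.TensorProduct.tmul_mul_tmul, one_mul, mul_one, sub_tmul, tmul_sub]
    abel

theorem mem_primitives {x : TensorAlgebra K V} :
    x ∈ primitives K V ↔ taComul K V x = x ⊗ₜ[K] 1 + 1 ⊗ₜ[K] x :=
  Iff.rfl

/-- `(ε ⊗ ε) ∘ Δ = ε`, while on a primitive element the left side is `2 ε(x)`. -/
theorem taCounit_eq_zero_of_mem_primitives {x : TensorAlgebra K V} (hx : x ∈ primitives K V) :
    taCounit K V x = 0 := by
  have hcounit : (Algebra.TensorProduct.productMap (taCounit K V) (taCounit K V)).comp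
      (taComul K V) = taCounit K V :=
    hom_ext <| LinearMap.ext fun v => by simp
  have h := AlgHom.congr_fun hcounit x
  rw [AlgHom.comp_apply, mem_primitives.mp hx] at h
  simpa using h

variable (K) in
noncomputable def antipode : TensorAlgebra K V →ₗ[K] TensorAlgebra K V :=
  (MulOpposite.opLinearEquiv K).symm.toLinearMap ∘ₗ
    (lift K (-((MulOpposite.opLinearEquiv K).toLinearMap ∘ₗ ι K))).toLinearMap

@[simp]
theorem antipode_one : antipode K (1 : TensorAlgebra K V) = 1 := by
  simp [antipode]

theorem antipode_mul (x y : TensorAlgebra K V) :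
    antipode K (x * y) = antipode K y * antipode K x := by
  simp [antipode]

@[simp]
theorem antipode_ι (v : V) : antipode K (ι K v) = -ι K v := by
  simp [antipode]

noncomputable def convolution (f g : TensorAlgebra K V →ₗ[K] TensorAlgebra K V) :
    TensorAlgebra K V →ₗ[K] TensorAlgebra K V :=
  LinearMap.mul' K _ ∘ₗ TensorProduct.map f g ∘ₗ (taComul K V).toLinearMap

theorem convolution_apply_of_mem_primitives (f g : TensorAlgebra K V →ₗ[K] TensorAlgebra K V)
    {x : TensorAlgebra K V} (hx : x ∈ primitives K V) :
    convolution f g x = f x * g 1 + f 1 * g x := by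
  simp [convolution, mem_primitives.mp hx]

@[simp]
theorem convolution_one (f g : TensorAlgebra K V →ₗ[K] TensorAlgebra K V) :
    convolution f g 1 = f 1 * g 1 := by
  simp [convolution, Algebra.TensorProduct.one_def]

theorem convolution_add_right (f g h : TensorAlgebra K V →ₗ[K] TensorAlgebra K V) :
    convolution f (g + h) = convolution f g + convolution f h := by
  simp [convolution, map_add_right, LinearMap.comp_add, LinearMap.add_comp]

theorem convolution_mulRight_comp (f g : TensorAlgebra K V →ₗ[K] TensorAlgebra K V)
    (a x : TensorAlgebra K V) :
    convolution f (LinearMap.mulRight K a ∘ₗ g) x = convolution f g x * a := by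
  simp only [convolution, LinearMap.coe_comp, Function.comp_apply, AlgHom.toLinearMap_apply]
  induction taComul K V x with
  | zero => simp
  | tmul y z => simp [mul_assoc]
  | add s t hs ht => simp only [map_add, hs, ht, add_mul]

theorem antipode_convolution_mul_ι (g : TensorAlgebra K V →ₗ[K] TensorAlgebra K V)
    (x : TensorAlgebra K V) (v : V) :
    convolution (antipode K) g (x * ι K v) =
      -(ι K v * convolution (antipode K) g x)
        + convolution (antipode K) (g ∘ₗ LinearMap.mulRight K (ι K v)) x := by
  simp only [convolution, LinearMap.coe_comp, Function.comp_apply, AlgHom.toLinearMap_apply,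
    map_mul, taComul_ι]
  induction taComul K V x with
  | zero => simp
  | tmul y z => simp [mul_add, Algebra.TensorProduct.tmul_mul_tmul, antipode_mul, mul_assoc]
  | add s t hs ht =>
    simp only [add_mul, map_add] at hs ht ⊢
    rw [hs, ht]
    noncomm_ring

theorem antipode_convolution_id :
    convolution (antipode K) LinearMap.id =
      Algebra.linearMap K (TensorAlgebra K V) ∘ₗ (taCounit K V).toLinearMap := by
  refine linearMap_ext_of_mul_ι (s := Set.univ) Submodule.span_univ (by simp)
    fun x v _ hx => ?_
  rw [antipode_convolution_mul_ι, LinearMap.id_comp,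
    ← LinearMap.comp_id (LinearMap.mulRight _ _), convolution_mulRight_comp, hx]
  simp [Algebra.commutes]

end TensorAlgebra

section Dynkin

open TensorAlgebra FreeLieAlgebra

variable {K V κ : Type*} [Field K] [AddCommGroup V] [Module K V] (b : Module.Basis κ K V)

theorem taCounit_tensorAlgebra_of_ne_one {w : FreeMonoid κ} (hw : w ≠ 1) :
    taCounit K V (b.tensorAlgebra w) = 0 := by
  induction w using FreeMonoid.inductionOn' with
  | one => exact absurd rfl hw
  | of_mul i w _ => simp [Module.Basis.tensorAlgebra_apply]

noncomputable def freeLieToTensor : FreeLieAlgebra K κ →ₗ⁅K⁆ TensorAlgebra K V :=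
  lift K fun i => ι K (b i)

@[simp]
theorem freeLieToTensor_of (i : κ) : freeLieToTensor b (of K i) = ι K (b i) :=
  lift_of_apply _ _

theorem freeLieToTensor_mem_primitives (a : FreeLieAlgebra K κ) :
    freeLieToTensor b a ∈ primitives K V := by
  induction a using FreeLieAlgebra.induction_on with
  | h_of i => simp [mem_primitives]
  | h_zero => simp
  | h_add a c ha hc => simpa using add_mem ha hc
  | h_smul t a ha => simpa using (primitives K V).smul_mem t ha
  | h_lie a c ha hc => simpa using (primitives K V).lie_mem ha hc

noncomputable def dynkin : TensorAlgebra K V →ₗ[K] FreeLieAlgebra K κ :=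
  b.tensorAlgebra.constr K fun w => leftNormed K w.toList

theorem dynkin_tensorAlgebra (w : FreeMonoid κ) :
    dynkin b (b.tensorAlgebra w) = leftNormed K w.toList :=
  b.tensorAlgebra.constr_basis _ _ _

@[simp]
theorem dynkin_one : dynkin b (1 : TensorAlgebra K V) = 0 := by
  simpa [Module.Basis.tensorAlgebra_one, leftNormed] using dynkin_tensorAlgebra b 1

theorem dynkin_ι (i : κ) : dynkin b (ι K (b i)) = of K i := by
  rw [← Module.Basis.tensorAlgebra_of, dynkin_tensorAlgebra]
  rfl

theorem dynkin_mul_ι (x : TensorAlgebra K V) (i : κ) :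
    dynkin b (x * ι K (b i)) = ⁅dynkin b x, of K i⁆ + taCounit K V x • of K i := by
  have hx := b.tensorAlgebra.mem_span x
  induction hx using Submodule.span_induction with
  | mem _ hw =>
    obtain ⟨w, rfl⟩ := hw
    rw [← Module.Basis.tensorAlgebra_mul_of, dynkin_tensorAlgebra, dynkin_tensorAlgebra,
      FreeMonoid.toList_mul, FreeMonoid.toList_of]
    rcases eq_or_ne w 1 with rfl | hw
    · simp [Module.Basis.tensorAlgebra_one, leftNormed]
    · rw [leftNormed_append_singleton _ fun h => hw (FreeMonoid.toList.injective h),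
        taCounit_tensorAlgebra_of_ne_one b hw, zero_smul, add_zero]
  | zero => simp
  | add x y _ _ hx hy => simp only [add_mul, map_add, hx, hy, add_lie, add_smul]; abel
  | smul c x _ hx => simp only [smul_mul_assoc, map_smul, hx, smul_lie, smul_add, smul_eq_mul,
      mul_smul]

noncomputable def degreeOp : Module.End K (TensorAlgebra K V) :=
  b.tensorAlgebra.constr K fun w => (w.length : K) • b.tensorAlgebra w

theorem degreeOp_tensorAlgebra (w : FreeMonoid κ) :
    degreeOp b (b.tensorAlgebra w) = (w.length : K) • b.tensorAlgebra w :=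
  b.tensorAlgebra.constr_basis _ _ _

@[simp]
theorem degreeOp_one : degreeOp b (1 : TensorAlgebra K V) = 0 := by
  simpa [Module.Basis.tensorAlgebra_one] using degreeOp_tensorAlgebra b 1

theorem degreeOp_comp_mulRight_ι (i : κ) :
    degreeOp b ∘ₗ LinearMap.mulRight K (ι K (b i)) =
      LinearMap.mulRight K (ι K (b i)) ∘ₗ degreeOp b + LinearMap.mulRight K (ι K (b i)) :=
  b.tensorAlgebra.ext fun w => by
    simp [← Module.Basis.tensorAlgebra_mul_of, degreeOp_tensorAlgebra, add_smul]

theorem freeLieToTensor_comp_dynkin :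
    (freeLieToTensor b : FreeLieAlgebra K κ →ₗ[K] TensorAlgebra K V) ∘ₗ dynkin b =
      convolution (antipode K) (degreeOp b) := by
  refine linearMap_ext_of_mul_ι b.span_eq (by simp) fun x v ⟨i, hi⟩ hx => ?_
  subst hi
  rw [antipode_convolution_mul_ι, degreeOp_comp_mulRight_ι, convolution_add_right,
    LinearMap.add_apply, convolution_mulRight_comp, ← LinearMap.comp_id (LinearMap.mulRight _ _),
    convolution_mulRight_comp, antipode_convolution_id, ← hx]
  simp [dynkin_mul_ι, Ring.lie_def, Algebra.smul_def, Algebra.commutes]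
  noncomm_ring

theorem freeLieToTensor_dynkin_of_mem_primitives {x : TensorAlgebra K V}
    (hx : x ∈ primitives K V) : freeLieToTensor b (dynkin b x) = degreeOp b x := by
  simpa [convolution_apply_of_mem_primitives _ _ hx] using
    LinearMap.congr_fun (freeLieToTensor_comp_dynkin b) x

theorem dynkin_mul_freeLieToTensor (c : FreeLieAlgebra K κ) {y : TensorAlgebra K V}
    (hy : taCounit K V y = 0) : dynkin b (y * freeLieToTensor b c) = ⁅dynkin b y, c⁆ := by
  induction c using FreeLieAlgebra.induction_on generalizing y with
  | h_of i => rw [freeLieToTensor_of, dynkin_mul_ι, hy, zero_smul, add_zero]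
  | h_zero => simp
  | h_add a c ha hc => rw [map_add, mul_add, map_add, ha hy, hc hy, lie_add]
  | h_smul t a ha => rw [map_smul, mul_smul_comm, map_smul, ha hy, lie_smul]
  | h_lie a c ha hc =>
    have hya : taCounit K V (y * freeLieToTensor b a) = 0 := by rw [map_mul, hy, zero_mul]
    have hyc : taCounit K V (y * freeLieToTensor b c) = 0 := by rw [map_mul, hy, zero_mul]
    rw [LieHom.map_lie, Ring.lie_def, mul_sub, ← mul_assoc, ← mul_assoc, map_sub, hc hya, ha hyc,
      ha hy, hc hy, leibniz_lie, ← lie_skew ⁅dynkin b y, c⁆ a]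
    abel

theorem dynkin_freeLieToTensor_lie (a c : FreeLieAlgebra K κ) :
    dynkin b (freeLieToTensor b ⁅a, c⁆) =
      ⁅dynkin b (freeLieToTensor b a), c⁆ + ⁅a, dynkin b (freeLieToTensor b c)⁆ := by
  have hε : ∀ a, taCounit K V (freeLieToTensor b a) = 0 := fun a =>
    taCounit_eq_zero_of_mem_primitives (freeLieToTensor_mem_primitives b a)
  rw [LieHom.map_lie, Ring.lie_def, map_sub, dynkin_mul_freeLieToTensor b c (hε a),
    dynkin_mul_freeLieToTensor b a (hε c), ← lie_skew a]
  abel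

theorem mem_iSup_eigenspace_dynkin_comp (a : FreeLieAlgebra K κ) :
    a ∈ ⨆ n : ℕ,
      Module.End.eigenspace (dynkin b ∘ₗ (freeLieToTensor b).toLinearMap) (n + 1 : K) := by
  induction a using FreeLieAlgebra.induction_on with
  | h_of i =>
    refine Submodule.mem_iSup_of_mem 0 (Module.End.mem_eigenspace_iff.mpr ?_)
    simp [dynkin_ι]
  | h_zero => exact zero_mem _
  | h_add a c ha hc => exact add_mem ha hc
  | h_smul t a ha => exact Submodule.smul_mem _ t ha
  | h_lie a c ha hc =>
    refine Submodule.iSup_induction _ (motive := fun a => ⁅a, c⁆ ∈ _) ha (fun p a hap => ?_)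
      (by simp) (fun _ _ h h' => by rw [add_lie]; exact add_mem h h')
    refine Submodule.iSup_induction _ (motive := fun c => ⁅a, c⁆ ∈ _) hc (fun q c hcq => ?_)
      (by simp) (fun _ _ h h' => by rw [lie_add]; exact add_mem h h')
    have hpq : ((p + q + 1 : ℕ) + 1 : K) = (p + 1) + (q + 1) := by push_cast; ring
    refine Submodule.mem_iSup_of_mem (p + q + 1) ?_
    rw [hpq]
    exact Module.End.lie_mem_eigenspace_add (dynkin_freeLieToTensor_lie b) hap hcq

theorem sub_algebraMap_taCounit_mem_iSup_eigenspace (x : TensorAlgebra K V) :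
    x - algebraMap K _ (taCounit K V x) ∈ ⨆ n : ℕ, (degreeOp b).eigenspace (n + 1 : K) := by
  have hx := b.tensorAlgebra.mem_span x
  induction hx using Submodule.span_induction with
  | mem _ hw =>
    obtain ⟨w, rfl⟩ := hw
    rcases eq_or_ne w 1 with rfl | hw
    · simp [Module.Basis.tensorAlgebra_one]
    obtain ⟨n, hn⟩ : ∃ n, w.length = n + 1 :=
      Nat.exists_eq_succ_of_ne_zero (mt FreeMonoid.length_eq_zero.mp hw)
    refine Submodule.mem_iSup_of_mem n ?_
    rw [taCounit_tensorAlgebra_of_ne_one b hw, map_zero, sub_zero, Module.End.mem_eigenspace_iff,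
      degreeOp_tensorAlgebra, hn]
    push_cast
    rfl
  | zero => simp
  | add x y _ _ hx hy => simpa only [map_add, add_sub_add_comm] using add_mem hx hy
  | smul c x _ hx =>
    simpa only [map_smul, smul_eq_mul, map_mul, ← Algebra.smul_def, smul_sub] using
      Submodule.smul_mem _ c hx

theorem freeLieToTensor_injective [CharZero K] : Function.Injective (freeLieToTensor b) := by
  refine (injective_iff_map_eq_zero _).mpr fun a ha => ?_
  simpa using Module.End.mem_of_apply_mem_of_mem_iSup_eigenspace (p := ⊥)
    (fun n => Nat.cast_add_one_ne_zero n) (by simp) (mem_iSup_eigenspace_dynkin_comp b a)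
    (by simp [ha])

theorem range_freeLieToTensor [CharZero K] :
    Set.range (freeLieToTensor b) = primitives K V := by
  refine (Set.range_subset_iff.mpr (freeLieToTensor_mem_primitives b)).antisymm fun x hx => ?_
  have hrange : ∀ y ∈ LinearMap.range (freeLieToTensor b).toLinearMap,
      degreeOp b y ∈ LinearMap.range (freeLieToTensor b).toLinearMap := by
    rintro _ ⟨a, rfl⟩
    exact ⟨_, freeLieToTensor_dynkin_of_mem_primitives b (freeLieToTensor_mem_primitives b a)⟩
  have hx' : x ∈ ⨆ n : ℕ, (degreeOp b).eigenspace (n + 1 : K) := by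
    simpa [taCounit_eq_zero_of_mem_primitives hx] using
      sub_algebraMap_taCounit_mem_iSup_eigenspace b x
  exact Module.End.mem_of_apply_mem_of_mem_iSup_eigenspace (fun n => Nat.cast_add_one_ne_zero n)
    hrange hx' ⟨_, freeLieToTensor_dynkin_of_mem_primitives b hx⟩

end Dynkin

/-- The canonical Lie algebra morphism from the free Lie algebra on `V`
(presented as the free Lie algebra on a basis of `V`) to `T(V)` — equipped with the
commutator bracket — induced by the inclusion of `V` into `T(V)`, is injective and its
image is exactly `Prim(T(V))`.  In particular `Prim(T(V))` is isomorphic to the free Lie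
algebra generated by `V`. -/
theorem statement17 {K V : Type*} [Field K] [CharZero K] [AddCommGroup V] [Module K V]
    {ι : Type*} (b : Module.Basis ι K V) :
    Function.Injective
      ⇑(FreeLieAlgebra.lift K (fun i : ι => TensorAlgebra.ι K (b i)))
    ∧ Set.range ⇑(FreeLieAlgebra.lift K (fun i : ι => TensorAlgebra.ι K (b i)))
        = {x : TensorAlgebra K V |
            taComul K V x = x ⊗ₜ[K] (1 : TensorAlgebra K V)
              + (1 : TensorAlgebra K V) ⊗ₜ[K] x} :=
  ⟨freeLieToTensor_injective b, range_freeLieToTensor b⟩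
end
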